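/- arXiv:1108.3685 — 2 statements merged into one kernel-verified Lean document; each statement's English description precedes it below -/
import Mathlib

section
/- Let c ≥ 0 and let a_1,...,a_n ∈ {0,1,...,p-1} be not all zero. For each i with a_i ≠ 0 let k(i) ≥ 0 be a natural number such that c = k(i) + n - i - 1 when i < n and c = k(n) + n - 1 when i = n. Set m(i) = a_i p^{k(i)} (and m(i) = 0 when a_i = 0), d = ∏_{i=1}^{n} d_{n,i}^{m(i)}, and j = max({n - i : 1 ≤ i < n, a_i ≠ 0} ∪ {n : if a_n ≠ 0}). Then P(c,t)(d) = 0 for every t with j < t ≤ c + 1. -/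
open MvPolynomial Matrix

/-- The algebra automorphism of `F_p[y_1,...,y_n]` induced by `g ∈ GL_n(F_p)`
(linear substitution of the variables: `y_i ↦ ∑_j g_{j i} y_j`). -/
noncomputable def glAct (p n : ℕ) (g : GL (Fin n) (ZMod p)) :
    MvPolynomial (Fin n) (ZMod p) →ₐ[ZMod p] MvPolynomial (Fin n) (ZMod p) :=
  aeval fun i => ∑ j, C ((g : Matrix (Fin n) (Fin n) (ZMod p)) j i) * X j

/-- The total Steenrod operation `P_t`, the algebra homomorphism with
`P_t(y_i) = y_i + y_i^p t`. -/
noncomputable def Pt (p n : ℕ) :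
    MvPolynomial (Fin n) (ZMod p) →ₐ[ZMod p] Polynomial (MvPolynomial (Fin n) (ZMod p)) :=
  aeval fun i => Polynomial.C (X i) + Polynomial.C (X i ^ p) * Polynomial.X

/-- The Steenrod operation `P^k`: the coefficient of `t^k` in `P_t(f)`. -/
noncomputable def steenrod (p n k : ℕ) (f : MvPolynomial (Fin n) (ZMod p)) :
    MvPolynomial (Fin n) (ZMod p) :=
  (Pt p n f).coeff k

/-- The Dickson invariant `d_{n,i}`, defined from the identity
`∏_{v ∈ F_p^n} (X + v·y) = ∑_{i=0}^n (-1)^i d_{n,i} X^{p^{n-i}}`. -/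
noncomputable def dickson (p n i : ℕ) [NeZero p] : MvPolynomial (Fin n) (ZMod p) :=
  (-1) ^ i *
    (∏ v : Fin n → ZMod p,
      (Polynomial.X + Polynomial.C (∑ j, C (v j) * X j))).coeff (p ^ (n - i))

/-- The iterated Steenrod operation `P(c,j) = P^{p^{c-j+1}} ∘ ⋯ ∘ P^{p^{c-1}} ∘ P^{p^c}`
(`P^{p^c}` applied first). -/
noncomputable def Pcj (p n c : ℕ) : ℕ → MvPolynomial (Fin n) (ZMod p) → MvPolynomial (Fin n) (ZMod p)
  | 0 => id
  | j + 1 => fun f => steenrod p n (p ^ (c + 1 - (j + 1))) (Pcj p n c j f)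

/-- Apply the composite `P^{p^{s_1}} ∘ P^{p^{s_2}} ∘ ⋯ ∘ P^{p^{s_r}}` (last entry applied first). -/
noncomputable def steenrodList (p n : ℕ) :
    List ℕ → MvPolynomial (Fin n) (ZMod p) → MvPolynomial (Fin n) (ZMod p)
  | [] => id
  | s :: rest => fun f => steenrod p n (p ^ s) (steenrodList p n rest f)

/-!
The exponents are arranged so that `p ^ M` divides every `m i`, where `M = c + 1 - j`; hence `d` is
a `p ^ M`-th power. By Frobenius, `P_t (g ^ p ^ M)` is `P_t g` with `t` replaced by `t ^ p ^ M` and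
coefficients raised to the `p ^ M`-th power, so `P^r` sends `p ^ M`-th powers to `p ^ M`-th powers
and kills them unless `p ^ M ∣ r`. The first `j` operations `P^{p^c}, …, P^{p^{c-j+1}}` of `P(c,t)`
therefore produce a `p ^ M`-th power, which the next one, `P^{p^{c-j}}`, kills.
-/

theorem steenrod_pow_prime_pow (p n : ℕ) [Fact p.Prime] (M r : ℕ)
    (g : MvPolynomial (Fin n) (ZMod p)) :
    steenrod p n r (g ^ p ^ M) = if p ^ M ∣ r then steenrod p n (r / p ^ M) g ^ p ^ M else 0 := by
  rw [steenrod, map_pow, ← Polynomial.map_iterateFrobenius_expand p, Polynomial.coeff_map,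
    Polynomial.coeff_expand (pow_pos (Fact.out : p.Prime).pos M)]
  split_ifs
  · rfl
  · exact map_zero _

theorem steenrod_prime_pow_pow_prime_pow_of_lt (p n : ℕ) [Fact p.Prime] {s M : ℕ} (hsM : s < M)
    (g : MvPolynomial (Fin n) (ZMod p)) :
    steenrod p n (p ^ s) (g ^ p ^ M) = 0 := by
  rw [steenrod_pow_prime_pow, if_neg]
  exact fun h => (Nat.pow_lt_pow_right (Fact.out : p.Prime).one_lt hsM).not_ge
    (Nat.le_of_dvd (pow_pos (Fact.out : p.Prime).pos s) h)

theorem Pcj_succ (p n c t : ℕ) (f : MvPolynomial (Fin n) (ZMod p)) :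
    Pcj p n c (t + 1) f = steenrod p n (p ^ (c - t)) (Pcj p n c t f) := by
  rw [Pcj, Nat.add_sub_add_right]

theorem Pcj_eq_zero_of_le (p n c : ℕ) {r t : ℕ} (hrt : r ≤ t)
    {f : MvPolynomial (Fin n) (ZMod p)} (hf : Pcj p n c r f = 0) : Pcj p n c t f = 0 := by
  induction t, hrt using Nat.le_induction with
  | base => exact hf
  | succ t _ ih => rw [Pcj_succ, ih, steenrod, map_zero, Polynomial.coeff_zero]

theorem exists_Pcj_pow_prime_pow_eq_pow (p n : ℕ) [Fact p.Prime] {c M r : ℕ}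
    (hr : r + M ≤ c + 1) (e : MvPolynomial (Fin n) (ZMod p)) :
    ∃ h, Pcj p n c r (e ^ p ^ M) = h ^ p ^ M := by
  induction r with
  | zero => exact ⟨e, rfl⟩
  | succ r ih =>
    obtain ⟨h, hh⟩ := ih (by omega)
    have hdvd : p ^ M ∣ p ^ (c - r) := pow_dvd_pow p (by omega)
    exact ⟨_, by rw [Pcj_succ, hh, steenrod_pow_prime_pow, if_pos hdvd]⟩

theorem Pcj_pow_prime_pow_eq_zero (p n : ℕ) [Fact p.Prime] {c M r t : ℕ} (hM : 0 < M)
    (hr : r + M = c + 1) (hrt : r < t) (e : MvPolynomial (Fin n) (ZMod p)) :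
    Pcj p n c t (e ^ p ^ M) = 0 := by
  refine Pcj_eq_zero_of_le p n c hrt ?_
  obtain ⟨h, hh⟩ := exists_Pcj_pow_prime_pow_eq_pow p n hr.le e
  rw [Pcj_succ, hh]
  exact steenrod_prime_pow_pow_prime_pow_of_lt p n (by omega) h

theorem Finset.exists_prod_pow_eq_pow_of_dvd {ι M : Type*} [CommMonoid M] (s : Finset ι)
    (f : ι → M) {m : ι → ℕ} {q : ℕ} (hq : ∀ i ∈ s, q ∣ m i) :
    ∃ e, ∏ i ∈ s, f i ^ m i = e ^ q :=
  ⟨∏ i ∈ s, f i ^ (m i / q), by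
    rw [← Finset.prod_pow]
    exact Finset.prod_congr rfl fun i hi => by rw [← pow_mul, Nat.div_mul_cancel (hq i hi)]⟩

theorem Pcj_monomial_vanish_general (p n : ℕ) [Fact p.Prime] (c : ℕ) (a k : ℕ → ℕ)
    (hk : ∀ i, 1 ≤ i → i ≤ n → a i ≠ 0 →
      (i < n → c + i + 1 = k i + n) ∧ (i = n → c + 1 = k i + n))
    (m : ℕ → ℕ) (hm : ∀ i, m i = a i * p ^ k i)
    (j : ℕ)
    (hjmax : ∀ x ∈ ((Finset.Icc 1 n).filter fun i => a i ≠ 0).image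
      fun i => if i = n then n else n - i, x ≤ j) :
    ∀ t, j < t → t ≤ c + 1 →
      Pcj p n c t (∏ i ∈ Finset.Icc 1 n, dickson p n i ^ m i) = 0 := by
  intro t hjt htc
  have hdvd : ∀ i ∈ Finset.Icc 1 n, p ^ (c + 1 - j) ∣ m i := by
    intro i hi
    obtain ⟨hi1, hin⟩ := Finset.mem_Icc.mp hi
    rw [hm]
    by_cases ha : a i = 0
    · simp [ha]
    have hij := hjmax _ (Finset.mem_image_of_mem _ (Finset.mem_filter.mpr ⟨hi, ha⟩))
    obtain ⟨hlt, heq⟩ := hk i hi1 hin ha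
    refine Dvd.dvd.mul_left (pow_dvd_pow p ?_) _
    split_ifs at hij with h
    · have := heq h; omega
    · have := hlt (lt_of_le_of_ne hin h); omega
  obtain ⟨e, he⟩ := Finset.exists_prod_pow_eq_pow_of_dvd _ (fun i => dickson p n i) hdvd
  rw [he]
  exact Pcj_pow_prime_pow_eq_zero p n (by omega) (by omega) hjt e

/-- With `d = ∏ d_{n,i}^{m(i)}`, `m(i) = a_i p^{k(i)}` and `j` as in Lemma
`SteenActionLemma3`, one has `P(c,t)(d) = 0` for all `t` with `j < t ≤ c + 1`. -/
theorem Pcj_monomial_vanish (p n : ℕ) [Fact p.Prime] (c : ℕ) (a k : ℕ → ℕ)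
    (ha_lt : ∀ i, 1 ≤ i → i ≤ n → a i < p)
    (ha_ne : ∃ i, 1 ≤ i ∧ i ≤ n ∧ a i ≠ 0)
    (hk : ∀ i, 1 ≤ i → i ≤ n → a i ≠ 0 →
      (i < n → c + i + 1 = k i + n) ∧ (i = n → c + 1 = k i + n))
    (m : ℕ → ℕ) (hm : ∀ i, m i = a i * p ^ k i)
    (j : ℕ)
    (hjmem : j ∈ ((Finset.Icc 1 n).filter fun i => a i ≠ 0).image
      fun i => if i = n then n else n - i)
    (hjmax : ∀ x ∈ ((Finset.Icc 1 n).filter fun i => a i ≠ 0).image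
      fun i => if i = n then n else n - i, x ≤ j) :
    ∀ t, j < t → t ≤ c + 1 →
      Pcj p n c t (∏ i ∈ Finset.Icc 1 n, dickson p n i ^ m i) = 0 :=
  Pcj_monomial_vanish_general p n c a k hk m hm j hjmax
end

section
/- Let p be an odd prime and let L_n = det( (y_j^{p^{i-1}})_{1 ≤ i,j ≤ n} ) ∈ F_p[y_1,...,y_n] be the Moore determinant. Then P^{p^k}(L_n^{p-2}) = 0 for every k with 0 ≤ k ≤ n - 2. -/
open MvPolynomial Matrix

/-! Applying `P_t` to the Moore matrix sends row `i` to `y^{p^i} + t^{p^i} y^{p^{i+1}}`, so by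
multilinearity of the determinant in the rows, `P_t(L_n) = ∑_S t^{∑_{i ∈ S} p^i} det N_S`, where `N_S`
has the rows indexed by `S` raised to the next Frobenius power. If `0 < ∑_{i ∈ S} p^i < p^{n-1}`, the
largest `r ∈ S` has `r + 1 < n` and `r + 1 ∉ S`, so rows `r` and `r + 1` of `N_S` coincide. Hence
`P_t(L_n) ≡ L_n` modulo `t^{p^{n-1}}`, the same holds for every power of `L_n`, and `P^m` kills all
powers of `L_n` for `0 < m < p^{n-1}`. -/

theorem Matrix.det_add_eq_sum_det_ite {ι R : Type*} [Fintype ι] [DecidableEq ι] [CommRing R]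
    (A B : Matrix ι ι R) :
    det (A + B) = ∑ s : Finset ι, det (of fun i => if i ∈ s then A i else B i) :=
  (detRowAlternating : (ι → R) [⋀^ι]→ₗ[R] R).map_add_univ A B

open Polynomial in
theorem Polynomial.coeff_det_diagonal_X_pow_mul_add {ι R : Type*} [Fintype ι] [DecidableEq ι]
    [CommRing R] (A B : Matrix ι ι R) (e : ι → ℕ) (m : ℕ) :
    (det (diagonal (fun i => X ^ e i) * B.map C + A.map C)).coeff m =
      ∑ s : Finset ι with ∑ i ∈ s, e i = m, det (of fun i => if i ∈ s then B i else A i) := by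
  set D : Matrix ι ι R[X] := diagonal (fun i => X ^ e i) * B.map C
  have hs (s : Finset ι) : det (of fun i => if i ∈ s then D i else A.map C i) =
        C (det (of fun i => if i ∈ s then B i else A i)) * X ^ (∑ i ∈ s, e i) := by
    set P : Matrix ι ι R[X] := (of fun i => if i ∈ s then B i else A i).map C with hP
    have hrows : (of fun i => if i ∈ s then D i else A.map C i) =
        of (s.piecewise (fun i => (X ^ e i : R[X]) • P i) P) := by
      refine Matrix.ext fun i j => ?_
      by_cases hi : i ∈ s <;> simp [Finset.piecewise, hi, P, D, diagonal_mul]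
    calc _ = (∏ i ∈ s, (X ^ e i : R[X])) • det P := by
          rw [hrows]
          exact (detRowAlternating : (ι → R[X]) [⋀^ι]→ₗ[R[X]] R[X]).map_piecewise_smul _ _ s
      _ = _ := by
          rw [hP, ← RingHom.mapMatrix_apply, ← RingHom.map_det, Finset.prod_pow_eq_pow_sum,
            smul_eq_mul, X_pow_mul]
  rw [Matrix.det_add_eq_sum_det_ite, finsetSum_coeff, Finset.sum_filter]
  refine Finset.sum_congr rfl fun s _ => ?_
  rw [hs, coeff_C_mul_X_pow]
  exact if_congr eq_comm rfl rfl

theorem Matrix.det_ite_succ_eq_zero {R : Type*} [CommRing R] {n : ℕ} (v : ℕ → Fin n → R)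
    (s : Finset (Fin n)) {r r' : Fin n} (hr : r ∈ s) (hr' : r' ∉ s) (h : (r' : ℕ) = r + 1) :
    det (of fun i => if i ∈ s then v (i + 1) else v i) = 0 := by
  refine det_zero_of_row_eq (i := r) (j := r') (fun hrr => hr' (hrr ▸ hr)) ?_
  ext j
  simp [hr, hr', h]

lemma exists_mem_succ_notMem_of_sum_pow_lt {p n : ℕ} (hp : 1 < p) {s : Finset (Fin n)}
    (hs : s.Nonempty) (h : ∑ i ∈ s, p ^ (i : ℕ) < p ^ (n - 1)) :
    ∃ r ∈ s, ∃ r' ∉ s, (r' : ℕ) = r + 1 := by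
  set r := s.max' hs
  have hr : (r : ℕ) + 1 < n := by
    have : p ^ (r : ℕ) < p ^ (n - 1) :=
      (Finset.single_le_sum (fun _ _ => Nat.zero_le _) (s.max'_mem hs)).trans_lt h
    have := (Nat.pow_lt_pow_iff_right hp).mp this
    omega
  refine ⟨r, s.max'_mem hs, ⟨(r : ℕ) + 1, hr⟩, fun hmem => ?_, rfl⟩
  have : ((⟨(r : ℕ) + 1, hr⟩ : Fin n) : ℕ) ≤ r := s.le_max' _ hmem
  simp at this

open Polynomial in
theorem Polynomial.coeff_pow_eq_zero_of_X_pow_dvd_sub_C {R : Type*} [CommRing R] {q : R[X]}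
    {a : R} {M m : ℕ} (h : X ^ M ∣ q - C a) (r : ℕ) (hm0 : 0 < m) (hm : m < M) :
    (q ^ r).coeff m = 0 := by
  have hr : X ^ M ∣ q ^ r - C (a ^ r) :=
    (C_pow (R := R)).symm ▸ h.trans (sub_dvd_pow_sub_pow q (C a) r)
  rw [← sub_add_cancel (q ^ r) (C (a ^ r)), coeff_add, X_pow_dvd_iff.mp hr m hm, coeff_C,
    if_neg hm0.ne', add_zero]

noncomputable def mooreMatrix (p n : ℕ) :
    Matrix (Fin n) (Fin n) (MvPolynomial (Fin n) (ZMod p)) :=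
  of fun i j => X j ^ p ^ (i : ℕ)

lemma steenrod_zero (p n : ℕ) (f : MvPolynomial (Fin n) (ZMod p)) : steenrod p n 0 f = f := by
  have h : ((Polynomial.aeval (0 : MvPolynomial (Fin n) (ZMod p))).restrictScalars (ZMod p)).comp
      (Pt p n) = AlgHom.id _ _ := by
    ext i
    simp [Pt]
  simpa [steenrod, Polynomial.coeff_zero_eq_aeval_zero] using congr($h f)

lemma Pt_X_pow_pow (p n : ℕ) [Fact p.Prime] (j : Fin n) (i : ℕ) :
    Pt p n (X j ^ p ^ i) =
      Polynomial.X ^ p ^ i * Polynomial.C (X j ^ p ^ (i + 1)) + Polynomial.C (X j ^ p ^ i) := by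
  rw [map_pow, Pt, aeval_X, add_pow_char_pow, mul_pow, ← Polynomial.C_pow, ← Polynomial.C_pow,
    ← pow_mul, pow_succ', add_comm, mul_comm]

lemma coeff_Pt_moore_det_eq_zero (p n : ℕ) [Fact p.Prime] {m : ℕ} (hm0 : 0 < m)
    (hm : m < p ^ (n - 1)) :
    (Pt p n (det (mooreMatrix p n))).coeff m = 0 := by
  have hmap : (Pt p n).mapMatrix (mooreMatrix p n) =
      diagonal (fun i : Fin n => Polynomial.X ^ p ^ (i : ℕ)) *
          (of fun i j : Fin n => (X j : MvPolynomial (Fin n) (ZMod p)) ^ p ^ ((i : ℕ) + 1)).map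
            Polynomial.C +
        (mooreMatrix p n).map Polynomial.C :=
    Matrix.ext fun i j => by simpa [mooreMatrix] using Pt_X_pow_pow p n j i
  rw [AlgHom.map_det, hmap, Polynomial.coeff_det_diagonal_X_pow_mul_add]
  refine Finset.sum_eq_zero fun s hs => ?_
  rw [Finset.mem_filter] at hs
  have hne : s.Nonempty := by
    rw [Finset.nonempty_iff_ne_empty]
    rintro rfl
    simp [← hs.2] at hm0
  obtain ⟨r, hr, r', hr', h⟩ :=
    exists_mem_succ_notMem_of_sum_pow_lt (Fact.out : p.Prime).one_lt hne (hs.2 ▸ hm)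
  exact Matrix.det_ite_succ_eq_zero (fun i j => X j ^ p ^ i) s hr hr' h

lemma X_pow_dvd_Pt_moore_det_sub (p n : ℕ) [Fact p.Prime] :
    Polynomial.X ^ p ^ (n - 1) ∣
      Pt p n (det (mooreMatrix p n)) - Polynomial.C (det (mooreMatrix p n)) := by
  refine Polynomial.X_pow_dvd_iff.mpr fun d hd => ?_
  rw [Polynomial.coeff_sub, Polynomial.coeff_C]
  rcases Nat.eq_zero_or_pos d with rfl | hd0
  · rw [if_pos rfl, ← steenrod, steenrod_zero, sub_self]
  · rw [if_neg hd0.ne', coeff_Pt_moore_det_eq_zero p n hd0 hd, sub_zero]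

theorem steenrod_moore_det_vanish_general (p n : ℕ) [Fact p.Prime]
    (k : ℕ) (hk : k + 2 ≤ n) :
    steenrod p n (p ^ k)
      ((Matrix.det (Matrix.of fun i j : Fin n => (X j : MvPolynomial (Fin n) (ZMod p)) ^ p ^ (i : ℕ))) ^ (p - 2)) = 0 := by
  have hp := (Fact.out : p.Prime).one_lt
  rw [steenrod, map_pow]
  exact Polynomial.coeff_pow_eq_zero_of_X_pow_dvd_sub_C (X_pow_dvd_Pt_moore_det_sub p n) _
    (Nat.pow_pos (by omega)) (Nat.pow_lt_pow_right hp (by omega))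

/-- For `p` odd and `L_n = det((y_j^{p^{i-1}})_{1 ≤ i,j ≤ n})` the Moore determinant,
`P^{p^k}(L_n^{p-2}) = 0` for all `0 ≤ k ≤ n - 2`. -/
theorem steenrod_moore_det_vanish (p n : ℕ) [Fact p.Prime] (hp : Odd p)
    (k : ℕ) (hk : k + 2 ≤ n) :
    steenrod p n (p ^ k)
      ((Matrix.det (Matrix.of fun i j : Fin n => (X j : MvPolynomial (Fin n) (ZMod p)) ^ p ^ (i : ℕ))) ^ (p - 2)) = 0 :=
  steenrod_moore_det_vanish_general p n k hk
end
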